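/- With μ Ahlfors regular of dimension d on E, σ = c H^d|_P flat with D_{x,Nr}(μ,σ) ≤ 2η, and N large, η small as above: every z ∈ E ∩ B(x, Nr/3) satisfies dist(z, P) ≤ η₁ r, where η₁ = C₁ N η^{1/(d+1)} and C₁ depends only on n, d, and the AR constant of μ. -/

import Mathlib

/-!
Let `z ∈ E ∩ B(x, N r / 3)` and `t = min (dist z P) (N r / 3)`. The tent `y ↦ max (t - |y - z|) 0`
is 1-Lipschitz, vanishes outside `B(x, N r)` and on `P`, so its `σ`-integral is `0`, while Ahlfors
regularity makes its `μ`-integral at least `C₀⁻¹ (t / 2) ^ (d + 1)`. The hypothesis then gives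
`t ≤ 4 C₀ η ^ (1 / (d + 1)) N r`, which for small `η` is below `N r / 3`, so `t = dist z P`.
-/

open MeasureTheory Metric Set ENNReal

noncomputable section

/-- `μ` is Ahlfors regular of dimension `d` with constant `C₀` on the set `E`. -/
def AhlforsRegular {n : ℕ} (μ : Measure (EuclideanSpace ℝ (Fin n)))
    (E : Set (EuclideanSpace ℝ (Fin n))) (d C₀ : ℝ) : Prop :=
  ∀ x ∈ E, ∀ r : ℝ, 0 < r →
    ENNReal.ofReal (C₀⁻¹ * r ^ d) ≤ μ (Metric.ball x r) ∧
      μ (Metric.ball x r) ≤ ENNReal.ofReal (C₀ * r ^ d)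

/-- The set `B ⊆ E × (0,∞)` satisfies a Carleson packing condition with constant `C`. -/
def CarlesonPacking {n : ℕ} (μ : Measure (EuclideanSpace ℝ (Fin n)))
    (E : Set (EuclideanSpace ℝ (Fin n))) (d : ℝ)
    (B : Set (EuclideanSpace ℝ (Fin n) × ℝ)) (C : ℝ) : Prop :=
  ∀ x ∈ E, ∀ r : ℝ, 0 < r →
    (∫⁻ y in E ∩ Metric.ball x r, ∫⁻ t in Set.Ioo (0:ℝ) r,
        B.indicator (fun _ => (1:ℝ≥0∞)) (y, t) / ENNReal.ofReal t ∂volume ∂μ)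
      ≤ ENNReal.ofReal (C * r ^ d)

namespace Metric

variable {X : Type*} [PseudoMetricSpace X]

def tent (z : X) (s : ℝ) (y : X) : ℝ := max (s - dist y z) 0

variable {z : X} {s : ℝ}

lemma tent_nonneg (y : X) : 0 ≤ tent z s y := le_max_right _ _

lemma tent_eq_zero {y : X} (h : s ≤ dist y z) : tent z s y = 0 :=
  max_eq_right (by linarith)

lemma tent_le (hs : 0 ≤ s) (y : X) : tent z s y ≤ s :=
  max_le (by linarith [dist_nonneg (x := y) (y := z)]) hs

lemma indicator_ball_half_le_tent (y : X) :
    (ball z (s / 2)).indicator (fun _ ↦ s / 2) y ≤ tent z s y := by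
  by_cases hy : y ∈ ball z (s / 2)
  · rw [indicator_of_mem hy]
    exact le_max_of_le_left (by linarith [mem_ball.1 hy])
  · rw [indicator_of_notMem hy]
    exact tent_nonneg y

lemma lipschitzWith_one_tent : LipschitzWith 1 (tent z s) := by
  have h := ((LipschitzWith.const (α := X) s).sub (LipschitzWith.dist_left z)).max_const 0
  rw [zero_add] at h
  exact h

variable [MeasurableSpace X] {μ : Measure X}

lemma integral_tent_eq_zero {S : Set X} (hμ : ∀ᵐ y ∂μ, y ∈ S) (hs : s ≤ infDist z S) :
    ∫ y, tent z s y ∂μ = 0 := by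
  refine integral_eq_zero_of_ae (hμ.mono fun y hy ↦ tent_eq_zero ?_)
  rw [dist_comm]
  exact hs.trans (infDist_le_dist_of_mem hy)

variable [OpensMeasurableSpace X]

lemma integrable_tent (hs : 0 ≤ s) (hμ : μ (ball z s) ≠ ∞) : Integrable (tent z s) μ := by
  refine Integrable.mono' ((integrable_indicator_iff measurableSet_ball).2
    (integrableOn_const (C := s) hμ)) lipschitzWith_one_tent.continuous.aestronglyMeasurable
    (Filter.Eventually.of_forall fun y ↦ ?_)
  rw [Real.norm_of_nonneg (tent_nonneg y)]
  by_cases hy : y ∈ ball z s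
  · rw [indicator_of_mem hy]
    exact tent_le hs y
  · rw [indicator_of_notMem hy, tent_eq_zero (not_lt.1 hy)]

lemma half_mul_measureReal_ball_le_integral_tent (hs : 0 ≤ s) (hμ : μ (ball z s) ≠ ∞) :
    s / 2 * μ.real (ball z (s / 2)) ≤ ∫ y, tent z s y ∂μ := by
  calc s / 2 * μ.real (ball z (s / 2))
      = ∫ y, (ball z (s / 2)).indicator (fun _ ↦ s / 2) y ∂μ := by
        rw [integral_indicator_const _ measurableSet_ball, smul_eq_mul, mul_comm]
    _ ≤ ∫ y, tent z s y ∂μ :=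
        integral_mono_of_nonneg (Filter.Eventually.of_forall fun y ↦
          indicator_nonneg (fun _ _ ↦ by linarith) y) (integrable_tent hs hμ)
          (Filter.Eventually.of_forall indicator_ball_half_le_tent)

end Metric

lemma le_four_mul_rpow_inv_mul_of_half_rpow_le {C t R η p : ℝ} (hC : 1 ≤ C) (hp : 1 ≤ p)
    (ht : 0 ≤ t) (hR : 0 ≤ R) (hη : 0 ≤ η) (h : C⁻¹ * (t / 2) ^ p ≤ 2 * η * R ^ p) :
    t ≤ 4 * C * η ^ p⁻¹ * R := by
  have hp₀ : 0 < p := by linarith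
  have hmass : (t / 2) ^ p ≤ 2 * C * η * R ^ p := by
    rw [inv_mul_le_iff₀ (by linarith)] at h
    linarith
  have hroot : t / 2 ≤ (2 * C * η) ^ p⁻¹ * R := by
    rw [← Real.rpow_le_rpow_iff (by positivity) (by positivity) hp₀, Real.mul_rpow
      (by positivity) hR, Real.rpow_inv_rpow (by positivity) hp₀.ne']
    exact hmass
  have hconst : (2 * C) ^ p⁻¹ ≤ 2 * C :=
    Real.rpow_le_self_of_one_le (by linarith) (inv_le_one_of_one_le₀ hp)
  calc t ≤ 2 * ((2 * C) ^ p⁻¹ * η ^ p⁻¹ * R) := by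
        rw [← Real.mul_rpow (by positivity) hη]
        linarith
    _ ≤ 2 * (2 * C * η ^ p⁻¹ * R) := by gcongr
    _ = 4 * C * η ^ p⁻¹ * R := by ring

namespace AhlforsRegular

variable {n : ℕ} {μ : Measure (EuclideanSpace ℝ (Fin n))} {E : Set (EuclideanSpace ℝ (Fin n))}
  {d C₀ : ℝ} {z : EuclideanSpace ℝ (Fin n)} {s : ℝ}

lemma measure_ball_ne_top (hAR : AhlforsRegular μ E d C₀) (hz : z ∈ E) (hs : 0 < s) :
    μ (ball z s) ≠ ∞ :=
  ne_top_of_le_ne_top ofReal_ne_top (hAR z hz s hs).2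

lemma inv_mul_rpow_le_measureReal_ball (hAR : AhlforsRegular μ E d C₀) (hz : z ∈ E)
    (hs : 0 < s) : C₀⁻¹ * s ^ d ≤ μ.real (ball z s) :=
  (ofReal_le_iff_le_toReal (hAR.measure_ball_ne_top hz hs)).1 (hAR z hz s hs).1

lemma inv_mul_half_rpow_le_integral_tent (hAR : AhlforsRegular μ E d C₀) (hz : z ∈ E)
    (hs : 0 < s) : C₀⁻¹ * (s / 2) ^ (d + 1) ≤ ∫ y, tent z s y ∂μ :=
  calc C₀⁻¹ * (s / 2) ^ (d + 1) = s / 2 * (C₀⁻¹ * (s / 2) ^ d) := by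
        rw [Real.rpow_add_one (by positivity)]
        ring
    _ ≤ s / 2 * μ.real (ball z (s / 2)) := by
        gcongr
        exact hAR.inv_mul_rpow_le_measureReal_ball hz (by positivity)
    _ ≤ ∫ y, tent z s y ∂μ :=
        half_mul_measureReal_ball_le_integral_tent hs.le (hAR.measure_ball_ne_top hz hs)

theorem min_infDist_le (hAR : AhlforsRegular μ E d C₀) (hC₀ : 1 ≤ C₀) (hd : 0 ≤ d)
    {σ : Measure (EuclideanSpace ℝ (Fin n))} {S : Set (EuclideanSpace ℝ (Fin n))}
    (hσ : ∀ᵐ y ∂σ, y ∈ S) {x : EuclideanSpace ℝ (Fin n)} {R η : ℝ} (hη : 0 ≤ η)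
    (hD : ∀ φ : EuclideanSpace ℝ (Fin n) → ℝ, LipschitzWith 1 φ → (∀ y ∉ ball x R, φ y = 0) →
      |(∫ y, φ y ∂μ) - ∫ y, φ y ∂σ| ≤ 2 * η * R ^ (d + 1))
    (hz : z ∈ E) (hzx : dist z x < R / 3) :
    min (infDist z S) (R / 3) ≤ 4 * C₀ * η ^ (d + 1)⁻¹ * R := by
  set t := min (infDist z S) (R / 3)
  have hR : 0 < R := by linarith [dist_nonneg.trans_lt hzx]
  obtain hS | hS := eq_or_lt_of_le (infDist_nonneg (x := z) (s := S))
  · exact (min_le_left _ _).trans (hS ▸ by positivity)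
  have ht : 0 < t := lt_min hS (by positivity)
  have hvanish : ∀ y ∉ ball x R, tent z t y = 0 := fun y hy ↦ tent_eq_zero <| by
    linarith [dist_triangle y z x, not_lt.1 (mem_ball.not.1 hy), dist_comm y z,
      min_le_right (infDist z S) (R / 3)]
  have hσ0 : ∫ y, tent z t y ∂σ = 0 := integral_tent_eq_zero hσ (min_le_left _ _)
  have hmass : C₀⁻¹ * (t / 2) ^ (d + 1) ≤ 2 * η * R ^ (d + 1) :=
    calc C₀⁻¹ * (t / 2) ^ (d + 1) ≤ ∫ y, tent z t y ∂μ :=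
          hAR.inv_mul_half_rpow_le_integral_tent hz ht
      _ ≤ 2 * η * R ^ (d + 1) := by
          simpa [hσ0] using (le_abs_self _).trans (hD _ lipschitzWith_one_tent hvanish)
  exact le_four_mul_rpow_inv_mul_of_half_rpow_le hC₀ (by linarith) ht.le hR.le hη hmass

end AhlforsRegular

theorem support_close_to_plane_general (n d : ℕ) (C₀ : ℝ)
    (hC₀ : 1 ≤ C₀) :
    ∃ N₀ η₀ C₁ : ℝ, 0 < η₀ ∧ 1 ≤ C₁ ∧
      ∀ (μ : Measure (EuclideanSpace ℝ (Fin n))) (E : Set (EuclideanSpace ℝ (Fin n)))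
        (P : AffineSubspace ℝ (EuclideanSpace ℝ (Fin n)))
        (x : EuclideanSpace ℝ (Fin n)) (r N η c : ℝ),
        AhlforsRegular μ E (d : ℝ) C₀ → x ∈ E → 0 < r → N₀ ≤ N → 0 < η → η ≤ η₀ → 0 < c →
        Module.finrank ℝ P.direction = d →
        (P : Set (EuclideanSpace ℝ (Fin n))).Nonempty →
        (∀ φ : EuclideanSpace ℝ (Fin n) → ℝ, LipschitzWith 1 φ →
          (∀ z ∉ Metric.ball x (N * r), φ z = 0) →
          |(∫ z, φ z ∂μ) -
              ∫ z, φ z ∂((ENNReal.ofReal c) •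
                (μH[(d : ℝ)]).restrict (P : Set (EuclideanSpace ℝ (Fin n))))|
            ≤ 2 * η * (N * r) ^ ((d : ℝ) + 1)) →
        ∀ z ∈ E ∩ Metric.ball x (N * r / 3),
          Metric.infDist z (P : Set (EuclideanSpace ℝ (Fin n)))
            ≤ C₁ * N * η ^ (1 / ((d : ℝ) + 1)) * r := by
  refine ⟨0, (16 * C₀)⁻¹ ^ ((d : ℝ) + 1), 4 * C₀, by positivity, by linarith, ?_⟩
  intro μ E P x r N η c hAR _ _ _ hη hηη₀ _ _ _ hD z ⟨hzE, hzx⟩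
  have hPclosed : IsClosed (P : Set (EuclideanSpace ℝ (Fin n))) :=
    P.isClosed_direction_iff.1 (Submodule.closed_of_finiteDimensional _)
  have hmin := hAR.min_infDist_le hC₀ d.cast_nonneg
    (Measure.ae_smul_measure (ae_restrict_mem hPclosed.measurableSet) _) hη.le hD hzE
    (mem_ball.1 hzx)
  have hR : 0 < N * r := by linarith [dist_nonneg.trans_lt (mem_ball.1 hzx)]
  have hsmall : 4 * C₀ * η ^ ((d : ℝ) + 1)⁻¹ * (N * r) < N * r / 3 := by
    have hroot : η ^ ((d : ℝ) + 1)⁻¹ ≤ (16 * C₀)⁻¹ := by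
      calc η ^ ((d : ℝ) + 1)⁻¹ ≤ ((16 * C₀)⁻¹ ^ ((d : ℝ) + 1)) ^ ((d : ℝ) + 1)⁻¹ := by gcongr
        _ = (16 * C₀)⁻¹ := Real.rpow_rpow_inv (by positivity) (by positivity)
    have hfactor : 4 * C₀ * η ^ ((d : ℝ) + 1)⁻¹ ≤ 1 / 4 := by
      calc 4 * C₀ * η ^ ((d : ℝ) + 1)⁻¹ ≤ 4 * C₀ * (16 * C₀)⁻¹ := by gcongr
        _ = 1 / 4 := by field_simp; norm_num
    nlinarith
  rw [min_le_iff, or_iff_left (by linarith)] at hmin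
  rw [one_div]
  linarith

/-- If `D_{x,Nr}(μ, σ) ≤ 2η` for a flat measure `σ = c H^d|_P`, with `N` large and `η` small,
then every point of `E ∩ B(x, Nr/3)` lies within `η₁ r` of `P`, with
`η₁ = C₁ N η^{1/(d+1)}` and `C₁` depending only on `n`, `d`, and the AR constant of `μ`. -/
theorem support_close_to_plane (n d : ℕ) (C₀ : ℝ) (hdn : d < n) (hd : 0 < d)
    (hC₀ : 1 ≤ C₀) :
    ∃ N₀ η₀ C₁ : ℝ, 0 < η₀ ∧ 1 ≤ C₁ ∧
      ∀ (μ : Measure (EuclideanSpace ℝ (Fin n))) (E : Set (EuclideanSpace ℝ (Fin n)))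
        (P : AffineSubspace ℝ (EuclideanSpace ℝ (Fin n)))
        (x : EuclideanSpace ℝ (Fin n)) (r N η c : ℝ),
        AhlforsRegular μ E (d : ℝ) C₀ → x ∈ E → 0 < r → N₀ ≤ N → 0 < η → η ≤ η₀ → 0 < c →
        Module.finrank ℝ P.direction = d →
        (P : Set (EuclideanSpace ℝ (Fin n))).Nonempty →
        (∀ φ : EuclideanSpace ℝ (Fin n) → ℝ, LipschitzWith 1 φ →
          (∀ z ∉ Metric.ball x (N * r), φ z = 0) →
          |(∫ z, φ z ∂μ) -
              ∫ z, φ z ∂((ENNReal.ofReal c) •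
                (μH[(d : ℝ)]).restrict (P : Set (EuclideanSpace ℝ (Fin n))))|
            ≤ 2 * η * (N * r) ^ ((d : ℝ) + 1)) →
        ∀ z ∈ E ∩ Metric.ball x (N * r / 3),
          Metric.infDist z (P : Set (EuclideanSpace ℝ (Fin n)))
            ≤ C₁ * N * η ^ (1 / ((d : ℝ) + 1)) * r :=
  support_close_to_plane_general n d C₀ hC₀
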